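/- arXiv:1405.1292 — 6 statements merged into one kernel-verified Lean document; each statement's English description precedes it below -/
import Mathlib

section
/- Let α > 1, w_o > 0 with w_o + e^{-w_o} = α, γ = w_o e^{w_o}, and define F(t) = (w_o/α) e^{-t/α} for t ≥ 0 and F(t) = 1 − 1/(1 + γ e^{-t}) for t < 0, and G(t) = α/(1 + γ e^t) for t ≥ 0, G(t) = 1 for t < 0. Then F(t) = exp(−(1/α) ∫_{−t}^∞ G(z) dz) for all t ∈ ℝ. -/
/-! On `t ≥ 0` the integral splits as `∫_{-t}^0 1 + ∫_0^∞ G = t + α log (1 + 1/γ)`, and on `t < 0`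
it is `∫_{-t}^∞ G = α log (1 + e^t/γ)`, because `-log (1 + e^{-z}/γ)` is an antiderivative of
`1/(1 + γ e^z)` vanishing at `+∞`. Exponentiating gives `F`; the constant in front of `e^{-t/α}`
is `γ/(1 + γ) = w/α`, since `1 + γ = 1 + w e^w = α e^w`. -/

open MeasureTheory Set Filter Topology Real

lemma hasDerivAt_neg_log_one_add_exp_neg_div {γ : ℝ} (hγ : 0 < γ) (z : ℝ) :
    HasDerivAt (fun z => -log (1 + exp (-z) / γ)) (1 + γ * exp z)⁻¹ z := by
  have hpos : 0 < 1 + exp (-z) / γ := by positivity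
  have hd : HasDerivAt (fun z => -log (1 + exp (-z) / γ)) _ z :=
    ((((hasDerivAt_neg z).exp).div_const γ).const_add 1).log hpos.ne' |>.neg
  convert hd using 1
  rw [exp_neg]
  field_simp
  ring

lemma tendsto_neg_log_one_add_exp_neg_div (γ : ℝ) :
    Tendsto (fun z => -log (1 + exp (-z) / γ)) atTop (𝓝 0) := by
  have h := (((tendsto_exp_neg_atTop_nhds_zero.div_const γ).const_add 1).log
    (by norm_num)).neg
  simpa using h

lemma integrableOn_Ioi_inv_one_add_mul_exp {γ : ℝ} (hγ : 0 < γ) (s : ℝ) :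
    IntegrableOn (fun z => (1 + γ * exp z)⁻¹) (Ioi s) :=
  integrableOn_Ioi_deriv_of_nonneg' (fun z _ => hasDerivAt_neg_log_one_add_exp_neg_div hγ z)
    (fun z _ => by positivity) (tendsto_neg_log_one_add_exp_neg_div γ)

lemma integral_Ioi_inv_one_add_mul_exp {γ : ℝ} (hγ : 0 < γ) (s : ℝ) :
    ∫ z in Ioi s, (1 + γ * exp z)⁻¹ = log (1 + exp (-s) / γ) := by
  rw [integral_Ioi_of_hasDerivAt_of_nonneg'
    (fun z _ => hasDerivAt_neg_log_one_add_exp_neg_div hγ z) (fun z _ => by positivity)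
    (tendsto_neg_log_one_add_exp_neg_div γ)]
  ring

lemma setIntegral_Ioi_eq_of_eqOn_Ioo {f : ℝ → ℝ} {a b c : ℝ} (hab : a ≤ b)
    (hf : EqOn f (fun _ => c) (Ioo a b)) (hint : IntegrableOn f (Ioi b)) :
    ∫ x in Ioi a, f x = (b - a) * c + ∫ x in Ioi b, f x := by
  have hIoo : IntegrableOn f (Ioo a b) :=
    (integrableOn_const measure_Ioo_lt_top.ne).congr_fun hf.symm measurableSet_Ioo
  rw [← Ioc_union_Ioi_eq_Ioi hab, setIntegral_union Ioc_disjoint_Ioi_same measurableSet_Ioi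
    ((integrableOn_Ioc_iff_integrableOn_Ioo).2 hIoo) hint, integral_Ioc_eq_integral_Ioo,
    setIntegral_congr_fun measurableSet_Ioo hf, setIntegral_const, Real.volume_real_Ioo_of_le hab,
    smul_eq_mul]

lemma exp_neg_one_div_mul_mul_log {a x : ℝ} (ha : a ≠ 0) (hx : 0 < x) :
    exp (-(1 / a) * (a * log x)) = x⁻¹ := by
  rw [← mul_assoc, neg_mul, one_div_mul_cancel ha, neg_one_mul, exp_neg, exp_log hx]

lemma mul_exp_div_one_add_mul_exp (w : ℝ) : w * exp w / (1 + w * exp w) = w / (w + exp (-w)) := by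
  rw [exp_neg]
  field_simp
  ring

theorem F_integral_eq (α w γ : ℝ) (hα : 1 < α) (hw : 0 < w)
    (hwα : w + Real.exp (-w) = α) (hγ : γ = w * Real.exp w)
    (F G : ℝ → ℝ)
    (hF : ∀ t : ℝ, F t = if 0 ≤ t then (w / α) * Real.exp (-t / α)
      else 1 - 1 / (1 + γ * Real.exp (-t)))
    (hG : ∀ t : ℝ, G t = if 0 ≤ t then α / (1 + γ * Real.exp t) else 1) :
    ∀ t : ℝ, F t = Real.exp (-(1 / α) * ∫ z in Set.Ici (-t), G z) := by
  have hα0 : α ≠ 0 := by positivity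
  have hγ0 : 0 < γ := hγ ▸ by positivity
  have hG_Ici : EqOn G (fun z => α * (1 + γ * exp z)⁻¹) (Ici 0) := fun z hz => by
    rw [hG, if_pos (mem_Ici.1 hz), div_eq_mul_inv]
  have hG_int : ∀ s ≥ 0, IntegrableOn G (Ioi s) := fun s hs =>
    IntegrableOn.congr_fun ((integrableOn_Ioi_inv_one_add_mul_exp hγ0 s).const_mul α)
      (hG_Ici.mono (Ioi_subset_Ici hs)).symm measurableSet_Ioi
  have hG_integral : ∀ s ≥ 0, ∫ z in Ioi s, G z = α * log (1 + exp (-s) / γ) := fun s hs => by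
    rw [setIntegral_congr_fun measurableSet_Ioi (hG_Ici.mono (Ioi_subset_Ici hs)),
      integral_const_mul, integral_Ioi_inv_one_add_mul_exp hγ0]
  intro t
  rw [hF, integral_Ici_eq_integral_Ioi]
  split_ifs with ht
  · have hG_Ioo : EqOn G (fun _ => 1) (Ioo (-t) 0) := fun z hz => by
      rw [hG, if_neg hz.2.not_ge]
    have hconst : γ / (1 + γ) = w / α := by
      rw [hγ, ← hwα, mul_exp_div_one_add_mul_exp]
    rw [setIntegral_Ioi_eq_of_eqOn_Ioo (by linarith) hG_Ioo (hG_int 0 le_rfl),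
      hG_integral 0 le_rfl, zero_sub, neg_neg, neg_zero, exp_zero, mul_add, exp_add,
      exp_neg_one_div_mul_mul_log hα0 (by positivity), ← hconst]
    field_simp
    ring
  · rw [hG_integral (-t) (by linarith), exp_neg_one_div_mul_mul_log hα0 (by positivity),
      neg_neg, exp_neg]
    field_simp
    ring
end

section
/- Let α > 1, w_o > 0 with w_o + e^{-w_o} = α, γ = w_o e^{w_o}, and define F(t) = (w_o/α) e^{-t/α} for t ≥ 0 and F(t) = 1 − 1/(1 + γ e^{-t}) for t < 0, and G(t) = α/(1 + γ e^t) for t ≥ 0, G(t) = 1 for t < 0. Then for all t ≥ 0, G(t) = exp(−∫_{−t}^∞ F(z) dz). -/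
/-!
On `[0, ∞)` the integrand `F` is `w` times an exponential density, so it contributes `w`; on
`[-t, 0)` it is the derivative of `-log (1 + γ e^{-z})`, so it contributes
`log (1 + γ e^t) - log (1 + γ)`. Hence `exp (-∫_{-t}^∞ F) = e^{-w} (1 + γ) / (1 + γ e^t)`, and
`e^{-w} (1 + γ) = e^{-w} + w = α` because `γ = w e^w`.
-/

open MeasureTheory Set Real

lemma integrableOn_Ici_exp_neg_div {a : ℝ} (ha : 0 < a) (c : ℝ) :
    IntegrableOn (fun z => exp (-z / a)) (Ici c) := by
  rw [integrableOn_Ici_iff_integrableOn_Ioi]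
  simpa only [div_eq_inv_mul, mul_neg, neg_mul] using exp_neg_integrableOn_Ioi c (inv_pos.2 ha)

lemma integral_Ici_exp_neg_div {a : ℝ} (ha : 0 < a) (c : ℝ) :
    ∫ z in Ici c, exp (-z / a) = a * exp (-c / a) := by
  have h := integral_exp_mul_Ioi (neg_lt_zero.2 (inv_pos.2 ha)) c
  simp only [neg_mul, ← neg_div, ← div_eq_inv_mul, div_neg, neg_neg, div_inv_eq_mul] at h
  rw [integral_Ici_eq_integral_Ioi, h, mul_comm]

lemma continuous_one_sub_inv_one_add_mul_exp_neg {γ : ℝ} (hγ : 0 ≤ γ) :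
    Continuous fun z => 1 - 1 / (1 + γ * exp (-z)) := by
  refine continuous_const.sub (continuous_const.div (by fun_prop) fun z => ?_)
  positivity

lemma hasDerivAt_neg_log_one_add_mul_exp_neg {γ : ℝ} (hγ : 0 ≤ γ) (x : ℝ) :
    HasDerivAt (fun z => -log (1 + γ * exp (-z))) (1 - 1 / (1 + γ * exp (-x))) x := by
  have hpos : 0 < 1 + γ * exp (-x) := by positivity
  have hinner : HasDerivAt (fun z => 1 + γ * exp (-z)) (-(γ * exp (-x))) x := by
    simpa using (((hasDerivAt_neg x).exp).const_mul γ).const_add 1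
  refine (hinner.log hpos.ne').neg.congr_deriv ?_
  field_simp
  ring

lemma integral_one_sub_inv_one_add_mul_exp_neg {γ : ℝ} (hγ : 0 ≤ γ) (a b : ℝ) :
    ∫ z in a..b, (1 - 1 / (1 + γ * exp (-z))) =
      log (1 + γ * exp (-a)) - log (1 + γ * exp (-b)) := by
  rw [intervalIntegral.integral_eq_sub_of_hasDerivAt
    (fun x _ => hasDerivAt_neg_log_one_add_mul_exp_neg hγ x)
    ((continuous_one_sub_inv_one_add_mul_exp_neg hγ).intervalIntegrable a b)]
  ring

lemma integral_Ici_eq_intervalIntegral_add_of_eqOn {E : Type*} [NormedAddCommGroup E]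
    [NormedSpace ℝ E] {F f g : ℝ → E} {a b : ℝ} (hab : a ≤ b) (hf : IntegrableOn f (Ico a b))
    (hg : IntegrableOn g (Ici b)) (hFf : EqOn F f (Ico a b)) (hFg : EqOn F g (Ici b)) :
    ∫ z in Ici a, F z = (∫ z in a..b, f z) + ∫ z in Ici b, g z := by
  have hF : IntegrableOn F (Ici a) := by
    rw [← Ico_union_Ici_eq_Ici hab]
    exact (hf.congr_fun hFf.symm measurableSet_Ico).union (hg.congr_fun hFg.symm measurableSet_Ici)
  rw [← sub_add_cancel (∫ z in Ici a, F z) (∫ z in Ici b, F z),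
    intervalIntegral.integral_Ici_sub_Ici hF hab, setIntegral_congr_fun measurableSet_Ico hFf,
    setIntegral_congr_fun measurableSet_Ici hFg, integral_Ico_eq_integral_Ioc,
    intervalIntegral.integral_of_le hab]

lemma exp_neg_mul_one_add_mul_exp (w : ℝ) : exp (-w) * (1 + w * exp w) = w + exp (-w) := by
  rw [mul_add, mul_one, mul_left_comm, ← exp_add, neg_add_cancel, exp_zero, mul_one, add_comm]

theorem G_integral_eq (α w γ : ℝ) (hα : 1 < α) (hw : 0 < w)
    (hwα : w + Real.exp (-w) = α) (hγ : γ = w * Real.exp w)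
    (F G : ℝ → ℝ)
    (hF : ∀ t : ℝ, F t = if 0 ≤ t then (w / α) * Real.exp (-t / α)
      else 1 - 1 / (1 + γ * Real.exp (-t)))
    (hG : ∀ t : ℝ, G t = if 0 ≤ t then α / (1 + γ * Real.exp t) else 1) :
    ∀ t : ℝ, 0 ≤ t → G t = Real.exp (-∫ z in Set.Ici (-t), F z) := by
  intro t ht
  have hα0 : 0 < α := by linarith
  have hγ0 : 0 ≤ γ := hγ ▸ by positivity
  have hsplit := integral_Ici_eq_intervalIntegral_add_of_eqOn (F := F) (neg_nonpos.2 ht)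
    ((continuous_one_sub_inv_one_add_mul_exp_neg hγ0).integrableOn_Icc.mono_set
      Ico_subset_Icc_self)
    ((integrableOn_Ici_exp_neg_div hα0 0).const_mul (w / α))
    (fun z hz => by simp [hF, not_le.2 hz.2]) (fun z hz => by simp [hF, hz.out])
  rw [integral_one_sub_inv_one_add_mul_exp_neg hγ0, integral_const_mul,
    integral_Ici_exp_neg_div hα0] at hsplit
  simp only [neg_neg, neg_zero, zero_div, exp_zero, mul_one, div_mul_cancel₀ w hα0.ne'] at hsplit
  rw [hsplit, hG, if_pos ht, ← hwα, ← exp_neg_mul_one_add_mul_exp, ← hγ,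
    show -(log (1 + γ * exp t) - log (1 + γ) + w) =
      log (1 + γ) + -w - log (1 + γ * exp t) by ring,
    exp_sub, exp_add, exp_log (by positivity), exp_log (by positivity)]
  ring
end

section
/- Let α > 1 and β, γ : ℝ → ℝ be nonnegative functions with β(x) = ∫_{−x}^∞ F(z)(1 − e^{−γ(z)}) dz for all x, and γ(x) = ∫_{−x}^∞ (G(z)/α)(1 − e^{−β(z)}) dz for x < 0, γ constant equal to γ(0) on [0,∞), where F and G are the complementary cdfs defined from the unique positive root w_o of w + e^{-w} = α with γ₀ = w_o e^{w_o}: F(t) = (w_o/α)e^{-t/α} for t ≥ 0, F(t) = 1 − 1/(1+γ₀ e^{-t}) for t < 0; G(t) = α/(1+γ₀ e^t) for t ≥ 0, G(t) = 1 for t < 0. Define η(x) = α F(−x) e^{γ(−x)} + G(x) e^{−β(x)} for x ≥ 0. Then η is nondecreasing on (0, ∞). -/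
/-!
On `x > 0` put `p x = (1 + γ₀ eˣ)⁻¹`, so that `F (-x) = 1 - p x`, `G x = α p x` and
`η = α ((1 - p) e^{γ(-x)} + p e^{-β})`. The logistic function satisfies `p' = -p (1 - p)`, and
substituting the equations for `β'` and `γ'` makes everything except a `cosh` term cancel:
`η' = 2 α p (1 - p) e^{-β} (cosh γ(-x) - 1) ≥ 0`.
-/

open Real Set

theorem hasDerivAt_inv_one_add_mul_exp {c x : ℝ} (hx : 1 + c * exp x ≠ 0) :
    HasDerivAt (fun y => (1 + c * exp y)⁻¹)
      (-((1 + c * exp x)⁻¹ * (1 - (1 + c * exp x)⁻¹))) x := by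
  refine ((((hasDerivAt_exp x).const_mul c).const_add 1).inv hx).congr_deriv ?_
  field_simp
  ring

theorem inv_one_add_mul_exp_mem_Icc {c : ℝ} (hc : 0 ≤ c) (x : ℝ) :
    (1 + c * exp x)⁻¹ ∈ Icc 0 1 :=
  ⟨by positivity, inv_le_one_of_one_le₀ (le_add_of_nonneg_right (by positivity))⟩

section Mixture

variable {p g b : ℝ → ℝ} {x : ℝ}

theorem hasDerivAt_mixture (hp : HasDerivAt p (-(p x * (1 - p x))) x)
    (hg : HasDerivAt g (-(p x * (1 - exp (-b x)))) x)
    (hb : HasDerivAt b ((1 - p x) * (1 - exp (-g x))) x) :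
    HasDerivAt (fun y => (1 - p y) * exp (g y) + p y * exp (-b y))
      (2 * (p x * (1 - p x)) * exp (-b x) * (cosh (g x) - 1)) x := by
  refine (((hp.const_sub 1).mul hg.exp).add (hp.mul hb.neg.exp)).congr_deriv ?_
  rw [Pi.neg_apply, cosh_eq, exp_neg (g x), exp_neg (b x)]
  field_simp
  ring

theorem monotoneOn_mixture {s : Set ℝ} (hs : Convex ℝ s)
    (hp : ∀ x ∈ s, HasDerivAt p (-(p x * (1 - p x))) x)
    (hg : ∀ x ∈ s, HasDerivAt g (-(p x * (1 - exp (-b x)))) x)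
    (hb : ∀ x ∈ s, HasDerivAt b ((1 - p x) * (1 - exp (-g x))) x)
    (hp_mem : ∀ x ∈ s, p x ∈ Icc 0 1) :
    MonotoneOn (fun y => (1 - p y) * exp (g y) + p y * exp (-b y)) s := by
  have hderiv x (hx : x ∈ s) := hasDerivAt_mixture (hp x hx) (hg x hx) (hb x hx)
  refine monotoneOn_of_hasDerivWithinAt_nonneg hs
    (fun x hx => (hderiv x hx).continuousAt.continuousWithinAt)
    (fun x hx => (hderiv x (interior_subset hx)).hasDerivWithinAt) fun x hx => ?_
  obtain ⟨hp_nonneg, hp_le_one⟩ := hp_mem x (interior_subset hx)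
  have hcosh := one_le_cosh (g x)
  have hq_nonneg : 0 ≤ 1 - p x := by linarith
  positivity

end Mixture

theorem eta_monotone_general (α w γ₀ : ℝ) (hα : 1 < α) (hw : 0 < w)
    (hγ₀ : γ₀ = w * Real.exp w)
    (F G : ℝ → ℝ)
    (hF : ∀ t : ℝ, F t = if 0 ≤ t then (w / α) * Real.exp (-t / α)
      else 1 - 1 / (1 + γ₀ * Real.exp (-t)))
    (hG : ∀ t : ℝ, G t = if 0 ≤ t then α / (1 + γ₀ * Real.exp t) else 1)
    (β γ : ℝ → ℝ)
    (hβ' : ∀ x : ℝ, HasDerivAt β (F (-x) * (1 - Real.exp (-γ (-x)))) x)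
    (hγ' : ∀ x : ℝ, x < 0 → HasDerivAt γ ((G (-x) / α) * (1 - Real.exp (-β (-x)))) x)
    (η : ℝ → ℝ)
    (hη : ∀ x : ℝ, η x = α * F (-x) * Real.exp (γ (-x)) + G x * Real.exp (-β x)) :
    MonotoneOn η (Set.Ioi 0) := by
  have hα_pos : 0 < α := by linarith
  have hγ₀_nonneg : 0 ≤ γ₀ := hγ₀ ▸ by positivity
  set p : ℝ → ℝ := fun y => (1 + γ₀ * exp y)⁻¹
  have hp_ne x : 1 + γ₀ * exp x ≠ 0 := by positivity
  have hF_neg x (hx : 0 < x) : F (-x) = 1 - p x := by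
    rw [hF, if_neg (by linarith), neg_neg, one_div]
  have hG_pos x (hx : 0 < x) : G x / α = p x := by
    rw [hG, if_pos hx.le, div_div_cancel_left' hα_pos.ne']
  have hmix : MonotoneOn (fun y => (1 - p y) * exp (γ (-y)) + p y * exp (-β y)) (Ioi 0) := by
    refine monotoneOn_mixture (convex_Ioi 0)
      (fun x _ => hasDerivAt_inv_one_add_mul_exp (hp_ne x)) (fun x hx => ?_)
      (fun x hx => hF_neg x hx ▸ hβ' x)
      (fun x _ => inv_one_add_mul_exp_mem_Icc hγ₀_nonneg x)
    have hγ_neg := (hγ' (-x) (neg_neg_of_pos hx)).comp x (hasDerivAt_neg x)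
    rw [neg_neg, hG_pos x hx, mul_neg_one] at hγ_neg
    exact hγ_neg
  have hscaled :
      MonotoneOn (fun y => α * ((1 - p y) * exp (γ (-y)) + p y * exp (-β y))) (Ioi 0) :=
    fun a ha b hb hab => mul_le_mul_of_nonneg_left (hmix ha hb hab) hα_pos.le
  refine hscaled.congr fun x hx => ?_
  dsimp only
  rw [hη, hF_neg x hx, ← hG_pos x hx]
  field_simp

theorem eta_monotone (α w γ₀ : ℝ) (hα : 1 < α) (hw : 0 < w)
    (hwα : w + Real.exp (-w) = α) (hγ₀ : γ₀ = w * Real.exp w)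
    (F G : ℝ → ℝ)
    (hF : ∀ t : ℝ, F t = if 0 ≤ t then (w / α) * Real.exp (-t / α)
      else 1 - 1 / (1 + γ₀ * Real.exp (-t)))
    (hG : ∀ t : ℝ, G t = if 0 ≤ t then α / (1 + γ₀ * Real.exp t) else 1)
    (β γ : ℝ → ℝ)
    (hβnn : ∀ x, 0 ≤ β x) (hγnn : ∀ x, 0 ≤ γ x)
    (hβ : ∀ x : ℝ, β x = ∫ z in Set.Ici (-x), F z * (1 - Real.exp (-γ z)))
    (hγneg : ∀ x : ℝ, x < 0 → γ x = ∫ z in Set.Ici (-x), (G z / α) * (1 - Real.exp (-β z)))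
    (hγconst : ∀ x : ℝ, 0 ≤ x → γ x = γ 0)
    (hβ' : ∀ x : ℝ, HasDerivAt β (F (-x) * (1 - Real.exp (-γ (-x)))) x)
    (hγ' : ∀ x : ℝ, x < 0 → HasDerivAt γ ((G (-x) / α) * (1 - Real.exp (-β (-x)))) x)
    (η : ℝ → ℝ)
    (hη : ∀ x : ℝ, η x = α * F (-x) * Real.exp (γ (-x)) + G x * Real.exp (-β x)) :
    MonotoneOn η (Set.Ioi 0) :=
  eta_monotone_general α w γ₀ hα hw hγ₀ F G hF hG β γ hβ' hγ' η hη
end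

section
/- Let w > 0 and define h(c) = w e^{c} + e^{-2w} e^{w e^{-c}} for c ≥ 0. Then h(c) ≥ w + e^{-w} for all c ≥ 0, with equality if and only if c = 0. -/
theorem eta_zero_ge (w : ℝ) (hw : 0 < w)
    (h : ℝ → ℝ)
    (hh : ∀ c, h c = w * Real.exp c + Real.exp (-(2 * w)) * Real.exp (w * Real.exp (-c))) :
    ∀ c : ℝ, 0 ≤ c →
      w + Real.exp (-w) ≤ h c ∧ (h c = w + Real.exp (-w) ↔ c = 0) := by
  intro c hc
  rw [hh]
  rcases eq_or_lt_of_le hc with h0 | h0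
  · subst h0
    constructor
    · simp [← Real.exp_add]; ring_nf; try linarith
    · constructor
      · intro; rfl
      · intro _
        simp [← Real.exp_add]; ring_nf; try linarith
  · -- strict case c > 0
    have key : w + Real.exp (-w) < w * Real.exp c + Real.exp (-(2 * w)) * Real.exp (w * Real.exp (-c)) := by
      have h1 : 1 + c < Real.exp c := by
        have := Real.add_one_lt_exp (ne_of_gt h0)
        linarith
      have h2 : 1 - c ≤ Real.exp (-c) := by
        have := Real.add_one_le_exp (-c)
        linarith
      have h3 : w * (1 - c) ≤ w * Real.exp (-c) :=
        mul_le_mul_of_nonneg_left h2 hw.le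
      have h4 : Real.exp (-w - w * c) ≤ Real.exp (-(2*w)) * Real.exp (w * Real.exp (-c)) := by
        rw [← Real.exp_add]
        apply Real.exp_le_exp.mpr
        nlinarith
      have h5 : Real.exp (-w) * (1 - w * c) ≤ Real.exp (-w - w*c) := by
        rw [show (-w - w*c) = -w + (-(w*c)) by ring, Real.exp_add]
        have := Real.add_one_le_exp (-(w*c))
        have hp := Real.exp_pos (-w)
        nlinarith
      have h6 : Real.exp (-w) < 1 := Real.exp_lt_one_iff.mpr (by linarith)
      have hp := Real.exp_pos (-w)
      nlinarith [mul_pos hw h0]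
    constructor
    · linarith
    · constructor
      · intro he; linarith
      · intro he; exact absurd he (ne_of_gt h0)
end

section
/- Let α > 1, w_o the unique positive root of w + e^{-w} = α, γ = w_o e^{w_o}, and G(x) = α/(1 + γ e^x) for x ≥ 0, G(x) = 1 for x < 0. Let G₀ : ℝ → (0,1] with G₀(x) = 1 for x < 0, strictly decreasing and continuous on [0,∞). Define Ĝ₀(x) = x − max(0, log((α − G₀(x))/(γ G₀(x)))) for x ≥ 0. Then G₀(x) ≥ G(x − Ĝ₀(x)) for all x ≥ 0, with equality if and only if G₀(x) ≤ G(0). -/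
theorem hat_shift_bound (α w γ : ℝ) (hα : 1 < α) (hw : 0 < w)
    (hwα : w + Real.exp (-w) = α) (hγ : γ = w * Real.exp w)
    (G : ℝ → ℝ)
    (hG : ∀ x : ℝ, G x = if 0 ≤ x then α / (1 + γ * Real.exp x) else 1)
    (G₀ : ℝ → ℝ)
    (hrange : ∀ x, G₀ x ∈ Set.Ioc (0 : ℝ) 1)
    (hneg : ∀ x : ℝ, x < 0 → G₀ x = 1)
    (hstrict : StrictAntiOn G₀ (Set.Ici 0))
    (hcont : ContinuousOn G₀ (Set.Ici 0))
    (Ghat : ℝ → ℝ)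
    (hGhat : ∀ x : ℝ, 0 ≤ x →
      Ghat x = x - max 0 (Real.log ((α - G₀ x) / (γ * G₀ x)))) :
    ∀ x : ℝ, 0 ≤ x →
      G (x - Ghat x) ≤ G₀ x ∧ (G₀ x = G (x - Ghat x) ↔ G₀ x ≤ G 0) := by
  intro x hx
  obtain ⟨hg0, hg1⟩ := hrange x
  set g := G₀ x with hgdef
  have hγ0 : 0 < γ := by rw [hγ]; positivity
  have hαg : 0 < α - g := by linarith
  have hgg : 0 < γ * g := mul_pos hγ0 hg0
  set t := (α - g) / (γ * g) with ht
  have ht0 : 0 < t := div_pos hαg hgg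
  have hxg : x - Ghat x = max 0 (Real.log t) := by
    rw [hGhat x hx]; ring
  have hm0 : 0 ≤ max 0 (Real.log t) := le_max_left _ _
  have hGval : G (x - Ghat x) = α / (1 + γ * Real.exp (max 0 (Real.log t))) := by
    rw [hG, hxg, if_pos hm0]
  have hG0 : G 0 = α / (1 + γ) := by
    rw [hG]; simp
  have h1γ : (0:ℝ) < 1 + γ := by linarith
  by_cases h : 1 ≤ t
  · have hlog : 0 ≤ Real.log t := Real.log_nonneg h
    have hmax : max 0 (Real.log t) = Real.log t := max_eq_right hlog
    have hexp : Real.exp (Real.log t) = t := Real.exp_log ht0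
    have heq : G (x - Ghat x) = g := by
      rw [hGval, hmax, hexp, ht]
      field_simp
      ring
    have hle : γ * g ≤ α - g := (one_le_div hgg).mp h
    refine ⟨heq.le, ⟨fun _ => ?_, fun _ => heq.symm⟩⟩
    rw [hG0, le_div_iff₀ h1γ]
    nlinarith
  · push_neg at h
    have hlog : Real.log t < 0 := Real.log_neg ht0 h
    have hmax : max 0 (Real.log t) = 0 := max_eq_left hlog.le
    have hGv : G (x - Ghat x) = α / (1 + γ) := by
      rw [hGval, hmax, Real.exp_zero, mul_one]
    have hlt : α - g < γ * g := (div_lt_one hgg).mp h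
    have hstr : α / (1 + γ) < g := by
      rw [div_lt_iff₀ h1γ]; nlinarith
    refine ⟨by rw [hGv]; linarith, ⟨fun he => absurd he (by rw [hGv]; linarith), fun he => ?_⟩⟩
    rw [hG0] at he; linarith
end

section
/- Let T be a finite rooted tree with root φ whose vertices are labeled o or m in alternating levels, with nonnegative edge weights, and suppose all relevant minimum-cost many-to-one matchings exist (a many-to-one matching requires every o-vertex to have degree exactly 1 and every m-vertex degree at least 1). For a child u of φ let T_u denote the subtree rooted at u. If φ has label o, then C(T) − C(T∖φ) = min over children u of φ of ( l(φ,u) − max(C(T_u) − C(T_u∖u), 0) ), where C denotes minimum many-to-one matching cost, T∖φ is the forest obtained by deleting φ, and l(φ,u) is the weight of edge {φ,u}. -/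
/-! An optimal matching of `T` uses exactly one edge `{u, φ}` at the `o`-root `φ`. Deleting it
leaves a matching of `T ∖ φ` if the `m`-vertex `u` keeps another edge, and of `T ∖ {φ, u}`
otherwise; conversely, hanging `{u, φ}` below a matching of either forest gives a matching of `T`.
Hence `C(T) = min_u (l(φ,u) + min(C(T ∖ φ), C(T ∖ {φ, u})))`. The two forests consist of `T_u`,
resp. `T_u ∖ u`, together with the same other components, and costs add over components, so
`C(T ∖ {φ, u}) - C(T ∖ φ) = C(T_u ∖ u) - C(T_u)`. -/

open Finset

/-- The set of descendants of `u` (including `u` itself) in a rooted tree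
given by the parent map `par`. -/
def desc {V : Type*} (par : V → V) (u : V) : Set V := {v | ∃ k : ℕ, par^[k] v = u}

/-- `M` (a set of vertices `v`, standing for the edges `{v, par v}`) is a many-to-one
matching of the vertex set `S` of the rooted forest with parent map `par`:
every vertex of even depth (label `o`) has degree exactly 1 and every vertex of odd
depth (label `m`) has degree at least 1. -/
def IsM2OMatching {V : Type*} [DecidableEq V] (par : V → V) (depth : V → ℕ)
    (S : Set V) (M : Finset V) : Prop :=
  (∀ v ∈ M, v ∈ S ∧ par v ∈ S ∧ v ≠ par v) ∧
  ∀ v ∈ S,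
    if Even (depth v) then
      (M.filter (fun u => par u = v)).card + (if v ∈ M then 1 else 0) = 1
    else
      1 ≤ (M.filter (fun u => par u = v)).card + (if v ∈ M then 1 else 0)

section Tree

variable {V : Type*} {par : V → V} {φ u w : V}

lemma mem_desc_self (par : V → V) (u : V) : u ∈ desc par u := ⟨0, rfl⟩

lemma mem_desc_of_par_mem (h : par w ∈ desc par u) : w ∈ desc par u :=
  let ⟨k, hk⟩ := h; ⟨k + 1, hk⟩

lemma par_mem_desc_of_ne (h : w ∈ desc par u) (hw : w ≠ u) : par w ∈ desc par u := by
  obtain ⟨_ | k, hk⟩ := h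
  · exact absurd hk hw
  · exact ⟨k, hk⟩

lemma notMem_desc_of_fixed (hroot : par φ = φ) (hu : u ≠ φ) : φ ∉ desc par u :=
  fun ⟨k, hk⟩ => hu (hk.symm.trans (Function.iterate_fixed hroot k))

lemma par_mem_insert_desc (hu : par u = φ) (hw : w ∈ desc par u) :
    par w ∈ insert φ (desc par u) := by
  by_cases hwu : w = u
  · exact .inl (hwu ▸ hu)
  · exact .inr (par_mem_desc_of_ne hw hwu)

def NoEdgeBetween (par : V → V) (A B : Set V) : Prop :=
  ∀ w, (w ∈ A → par w ∉ B) ∧ (w ∈ B → par w ∉ A)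

lemma NoEdgeBetween.symm {A B : Set V} (h : NoEdgeBetween par A B) : NoEdgeBetween par B A :=
  fun w => (h w).symm

lemma NoEdgeBetween.mono_right {A B B' : Set V} (h : NoEdgeBetween par A B) (hB : B' ⊆ B) :
    NoEdgeBetween par A B' :=
  fun w => ⟨fun hw hpw => (h w).1 hw (hB hpw), fun hw => (h w).2 (hB hw)⟩

lemma noEdgeBetween_compl_insert_desc (hu : par u = φ) :
    NoEdgeBetween par (insert φ (desc par u))ᶜ (desc par u) :=
  fun _ => ⟨fun hw hpw => hw (.inr (mem_desc_of_par_mem hpw)),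
    fun hw hpw => hpw (par_mem_insert_desc hu hw)⟩

lemma disjoint_compl_insert_desc : Disjoint (insert φ (desc par u))ᶜ (desc par u) :=
  disjoint_compl_left.mono_right (Set.subset_insert _ _)

lemma univ_diff_singleton_eq_union_desc (hroot : par φ = φ) (hu : u ≠ φ) :
    Set.univ \ {φ} = (insert φ (desc par u))ᶜ ∪ desc par u := by
  ext v
  by_cases hv : v ∈ desc par u
  · have hvφ : v ≠ φ := fun h => notMem_desc_of_fixed hroot hu (h ▸ hv)
    simp [hv, hvφ]
  · simp [hv]

lemma univ_diff_pair_eq_union_desc_diff (hroot : par φ = φ) (hu : u ≠ φ) :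
    Set.univ \ {φ, u} = (insert φ (desc par u))ᶜ ∪ (desc par u \ {u}) := by
  ext v
  by_cases hv : v ∈ desc par u
  · have hvφ : v ≠ φ := fun h => notMem_desc_of_fixed hroot hu (h ▸ hv)
    simp [hv, hvφ]
  · have hvu : v ≠ u := fun h => hv (h ▸ mem_desc_self par u)
    simp [hv, hvu]

end Tree

section Matching

variable {V : Type*} [DecidableEq V] {par : V → V} {depth : V → ℕ} {S A B : Set V}
  {M K : Finset V} {φ u v : V}

def m2oDegree (par : V → V) (M : Finset V) (v : V) : ℕ :=
  #(M.filter (fun w => par w = v)) + if v ∈ M then 1 else 0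

theorem isM2OMatching_iff : IsM2OMatching par depth S M ↔
    (∀ v ∈ M, v ∈ S ∧ par v ∈ S ∧ v ≠ par v) ∧
      ∀ v ∈ S, if Even (depth v) then m2oDegree par M v = 1 else 1 ≤ m2oDegree par M v :=
  Iff.rfl

lemma m2oDegree_congr (h : ∀ w, w = v ∨ par w = v → (w ∈ M ↔ w ∈ K)) :
    m2oDegree par M v = m2oDegree par K v := by
  have hstar : M.filter (fun w => par w = v) = K.filter (fun w => par w = v) := by
    ext w
    simp only [mem_filter]
    exact and_congr_left fun hw => h w (.inr hw)
  simp only [m2oDegree, hstar, h v (.inl rfl)]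

lemma IsM2OMatching.notMem_of_par_notMem (hM : IsM2OMatching par depth S M) (h : par v ∉ S) :
    v ∉ M :=
  fun hv => h (hM.1 v hv).2.1

lemma m2oDegree_union_of_notMem (hK : ∀ w ∈ K, w ∈ B ∧ par w ∈ B) (hv : v ∉ B) :
    m2oDegree par (M ∪ K) v = m2oDegree par M v := by
  refine m2oDegree_congr fun w hw => ⟨fun h => (mem_union.1 h).resolve_right fun hwK => ?_,
    mem_union_left K⟩
  rcases hw with rfl | rfl
  exacts [hv (hK w hwK).1, hv (hK w hwK).2]

theorem IsM2OMatching.union (hA : IsM2OMatching par depth A M)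
    (hB : IsM2OMatching par depth B K) (hAB : Disjoint A B) :
    IsM2OMatching par depth (A ∪ B) (M ∪ K) := by
  refine isM2OMatching_iff.2 ⟨fun w hw => ?_, fun v hv => ?_⟩
  · rcases mem_union.1 hw with hw | hw
    · obtain ⟨h₁, h₂, h₃⟩ := hA.1 w hw
      exact ⟨.inl h₁, .inl h₂, h₃⟩
    · obtain ⟨h₁, h₂, h₃⟩ := hB.1 w hw
      exact ⟨.inr h₁, .inr h₂, h₃⟩
  · rcases hv with hv | hv
    · rw [m2oDegree_union_of_notMem (fun w hw => (hB.1 w hw).imp_right And.left)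
        (Set.disjoint_left.1 hAB hv)]
      exact hA.2 v hv
    · rw [union_comm, m2oDegree_union_of_notMem (fun w hw => (hA.1 w hw).imp_right And.left)
        (Set.disjoint_right.1 hAB hv)]
      exact hB.2 v hv

open scoped Classical in
theorem IsM2OMatching.filter_mem_left (hM : IsM2OMatching par depth (A ∪ B) M)
    (hsep : NoEdgeBetween par A B) :
    IsM2OMatching par depth A (M.filter (· ∈ A)) := by
  have hpar : ∀ w ∈ M, w ∈ A → par w ∈ A := fun w hw hwA =>
    ((hM.1 w hw).2.1).resolve_right ((hsep w).1 hwA)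
  have hchild : ∀ w ∈ M, par w ∈ A → w ∈ A := fun w hw hpw =>
    ((hM.1 w hw).1).resolve_right fun hwB => (hsep w).2 hwB hpw
  refine isM2OMatching_iff.2 ⟨fun w hw => ?_, fun v hv => ?_⟩
  · obtain ⟨hwM, hwA⟩ := mem_filter.1 hw
    exact ⟨hwA, hpar w hwM hwA, (hM.1 w hwM).2.2⟩
  · rw [m2oDegree_congr (K := M) fun w hw => ?_]
    · exact hM.2 v (.inl hv)
    · refine ⟨fun h => (mem_filter.1 h).1, fun hwM => mem_filter.2 ⟨hwM, ?_⟩⟩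
      rcases hw with rfl | rfl
      exacts [hv, hchild w hwM hv]

theorem IsM2OMatching.insert_pendant (hK : IsM2OMatching par depth S K) (hp : par u ∉ S)
    (hu : u ≠ par u) (hp_even : Even (depth (par u))) (hu_odd : ¬Even (depth u)) :
    IsM2OMatching par depth (insert (par u) (insert u S)) (insert u K) := by
  refine isM2OMatching_iff.2 ⟨fun w hw => ?_, fun v hv => ?_⟩
  · rcases mem_insert.1 hw with rfl | hw
    · exact ⟨.inr (.inl rfl), .inl rfl, hu⟩
    · obtain ⟨h₁, h₂, h₃⟩ := hK.1 w hw
      exact ⟨.inr (.inr h₁), .inr (.inr h₂), h₃⟩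
  by_cases hvu : v = u
  · subst hvu
    simp [m2oDegree, hu_odd]
  rcases hv with rfl | rfl | hv
  · have hstar : (insert u K).filter (fun w => par w = par u) = {u} := by
      rw [filter_insert, if_pos rfl,
        filter_eq_empty_iff.2 fun w hw (h : par w = par u) => hp (h ▸ (hK.1 w hw).2.1)]
      rfl
    have hpK : par u ∉ insert u K := by
      simpa [hu.symm] using fun h => hp (hK.1 _ h).1
    simp [m2oDegree, hp_even, hstar, hpK]
  · exact absurd rfl hvu
  · rw [m2oDegree_congr (K := K) fun w hw => ?_]
    · exact hK.2 v hv
    · refine mem_insert.trans (or_iff_right ?_)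
      rintro rfl
      rcases hw with rfl | rfl
      exacts [hvu rfl, hp hv]

theorem IsM2OMatching.exists_root_edge (hM : IsM2OMatching par depth S M) (hφS : φ ∈ S)
    (hroot : par φ = φ) (hφ : Even (depth φ)) :
    ∃ u ∈ M, par u = φ ∧ u ≠ φ ∧ ∀ w ∈ M, par w = φ → w = u := by
  have hφM : φ ∉ M := fun h => (hM.1 φ h).2.2 hroot.symm
  have hdeg := hM.2 φ hφS
  simp only [hφ, hφM, if_true, if_false, add_zero] at hdeg
  obtain ⟨u, hu⟩ := card_eq_one.1 hdeg
  have hmem : ∀ w, w ∈ M ∧ par w = φ ↔ w = u := fun w => by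
    simpa using Finset.ext_iff.1 hu w
  obtain ⟨huM, hpu⟩ := (hmem u).2 rfl
  exact ⟨u, huM, hpu, ne_of_mem_of_not_mem huM hφM, fun w hw hpw => (hmem w).1 ⟨hw, hpw⟩⟩

theorem IsM2OMatching.erase_root_edge (hM : IsM2OMatching par depth S M) (hroot : par φ = φ)
    (huM : u ∈ M) (hu : par u = φ) (huniq : ∀ w ∈ M, par w = φ → w = u)
    (hu_odd : ¬Even (depth u)) :
    IsM2OMatching par depth (S \ {φ}) (M.erase u) ∨
      IsM2OMatching par depth (S \ {φ, u}) (M.erase u) := by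
  have hφM : φ ∉ M := fun h => (hM.1 φ h).2.2 hroot.symm
  have hune : u ≠ φ := ne_of_mem_of_not_mem huM hφM
  have hedge : ∀ w ∈ M.erase u, w ∈ S \ {φ} ∧ par w ∈ S \ {φ} ∧ w ≠ par w := fun w hw => by
    obtain ⟨hwu, hwM⟩ := mem_erase.1 hw
    obtain ⟨h₁, h₂, h₃⟩ := hM.1 w hwM
    exact ⟨⟨h₁, ne_of_mem_of_not_mem hwM hφM⟩, ⟨h₂, fun h => hwu (huniq w hwM h)⟩, h₃⟩
  have hdeg : ∀ v ∈ S \ {φ}, v ≠ u → if Even (depth v) then m2oDegree par (M.erase u) v = 1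
      else 1 ≤ m2oDegree par (M.erase u) v := fun v hv hvu => by
    rw [m2oDegree_congr (K := M) fun w hw => ?_]
    · exact hM.2 v hv.1
    · refine mem_erase.trans (and_iff_right ?_)
      rintro rfl
      rcases hw with rfl | h
      exacts [hvu rfl, hv.2 (hu ▸ h).symm]
  by_cases hchild : ∃ w ∈ M, par w = u
  · refine .inl (isM2OMatching_iff.2 ⟨hedge, fun v hv => ?_⟩)
    by_cases hvu : v = u
    · subst hvu
      obtain ⟨w, hwM, hpw⟩ := hchild
      have hw : w ∈ (M.erase v).filter (fun w => par w = v) :=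
        mem_filter.2 ⟨mem_erase.2 ⟨by rintro rfl; exact hune (hpw.symm.trans hu), hwM⟩, hpw⟩
      have := card_pos.2 ⟨w, hw⟩
      simp only [hu_odd, if_false, m2oDegree]
      omega
    · exact hdeg v hv hvu
  · refine .inr ⟨fun w hw => ?_, fun v hv => ?_⟩
    · obtain ⟨⟨h₁, hwφ⟩, ⟨h₂, hpwφ⟩, h₃⟩ := hedge w hw
      obtain ⟨hwu, hwM⟩ := mem_erase.1 hw
      simp only [Set.mem_sdiff, Set.mem_insert_iff, Set.mem_singleton_iff] at hwφ hpwφ ⊢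
      exact ⟨⟨h₁, not_or.2 ⟨hwφ, hwu⟩⟩, ⟨h₂, not_or.2 ⟨hpwφ, fun h => hchild ⟨w, hwM, h⟩⟩⟩, h₃⟩
    · simp only [Set.mem_sdiff, Set.mem_insert_iff, Set.mem_singleton_iff, not_or] at hv
      exact hdeg v ⟨hv.1, hv.2.1⟩ hv.2.2

lemma exists_isM2OMatching_compl_insert_desc (hroot : par φ = φ) (hu : par u = φ) (hune : u ≠ φ)
    (hT : ∃ M, IsM2OMatching par depth (Set.univ \ {φ}) M) :
    ∃ M, IsM2OMatching par depth (insert φ (desc par u))ᶜ M := by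
  classical
  obtain ⟨M, hM⟩ := hT
  rw [univ_diff_singleton_eq_union_desc hroot hune] at hM
  exact ⟨_, hM.filter_mem_left (noEdgeBetween_compl_insert_desc hu)⟩

lemma exists_isM2OMatching_univ_diff_pair (hroot : par φ = φ) (hu : par u = φ) (hune : u ≠ φ)
    (hT : ∃ M, IsM2OMatching par depth (Set.univ \ {φ}) M)
    (hD' : ∃ M, IsM2OMatching par depth (desc par u \ {u}) M) :
    ∃ M, IsM2OMatching par depth (Set.univ \ {φ, u}) M := by
  obtain ⟨R, hR⟩ := exists_isM2OMatching_compl_insert_desc hroot hu hune hT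
  obtain ⟨K, hK⟩ := hD'
  rw [univ_diff_pair_eq_union_desc_diff hroot hune]
  exact ⟨_, hR.union hK (disjoint_compl_insert_desc.mono_right Set.sdiff_subset)⟩

end Matching

section Cost

variable {V : Type*} [Finite V] [DecidableEq V] {par : V → V} {depth : V → ℕ} {l : V → ℝ}
  {S A B : Set V} {M : Finset V} {φ u : V}

noncomputable def m2oCost (par : V → V) (depth : V → ℕ) (l : V → ℝ) (S : Set V) : ℝ :=
  sInf {c : ℝ | ∃ M : Finset V, IsM2OMatching par depth S M ∧ c = ∑ v ∈ M, l v}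

lemma finite_m2oCosts (par : V → V) (depth : V → ℕ) (l : V → ℝ) (S : Set V) :
    {c : ℝ | ∃ M : Finset V, IsM2OMatching par depth S M ∧ c = ∑ v ∈ M, l v}.Finite :=
  (Set.finite_range fun M : Finset V => ∑ v ∈ M, l v).subset fun _ ⟨M, _, hc⟩ => ⟨M, hc.symm⟩

lemma m2oCost_le (hM : IsM2OMatching par depth S M) : m2oCost par depth l S ≤ ∑ v ∈ M, l v :=
  csInf_le (finite_m2oCosts par depth l S).bddBelow ⟨M, hM, rfl⟩

lemma exists_m2oCost_eq (h : ∃ M, IsM2OMatching par depth S M) :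
    ∃ M, IsM2OMatching par depth S M ∧ m2oCost par depth l S = ∑ v ∈ M, l v := by
  obtain ⟨M, hM⟩ := h
  have hne : {c : ℝ | ∃ M : Finset V, IsM2OMatching par depth S M ∧ c = ∑ v ∈ M, l v}.Nonempty :=
    ⟨_, M, hM, rfl⟩
  exact hne.csInf_mem (finite_m2oCosts par depth l S)

open scoped Classical in
theorem m2oCost_union (hAB : Disjoint A B) (hsep : NoEdgeBetween par A B)
    (hA : ∃ M, IsM2OMatching par depth A M) (hB : ∃ M, IsM2OMatching par depth B M) :
    m2oCost par depth l (A ∪ B) = m2oCost par depth l A + m2oCost par depth l B := by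
  obtain ⟨MA, hMA, hcA⟩ := exists_m2oCost_eq (l := l) hA
  obtain ⟨MB, hMB, hcB⟩ := exists_m2oCost_eq (l := l) hB
  obtain ⟨M, hM, hc⟩ := exists_m2oCost_eq (l := l) ⟨_, hMA.union hMB hAB⟩
  have hdisj : Disjoint MA MB := Finset.disjoint_left.2 fun w hwA hwB =>
    Set.disjoint_left.1 hAB (hMA.1 w hwA).1 (hMB.1 w hwB).1
  have hsplit : M.filter (· ∉ A) = M.filter (· ∈ B) := filter_congr fun w hw =>
    ⟨((hM.1 w hw).1).resolve_left, fun hwB hwA => Set.disjoint_left.1 hAB hwA hwB⟩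
  refine le_antisymm ?_ ?_
  · calc m2oCost par depth l (A ∪ B) ≤ ∑ v ∈ MA ∪ MB, l v := m2oCost_le (hMA.union hMB hAB)
      _ = _ := by rw [sum_union hdisj, hcA, hcB]
  · calc m2oCost par depth l A + m2oCost par depth l B
        ≤ ∑ v ∈ M.filter (· ∈ A), l v + ∑ v ∈ M.filter (· ∈ B), l v :=
          add_le_add (m2oCost_le (hM.filter_mem_left hsep))
            (m2oCost_le ((Set.union_comm A B ▸ hM).filter_mem_left hsep.symm))
      _ = m2oCost par depth l (A ∪ B) := by rw [← hsplit, sum_filter_add_sum_filter_not, hc]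

theorem m2oCost_univ_diff_pair_sub (hroot : par φ = φ) (hu : par u = φ) (hune : u ≠ φ)
    (hT : ∃ M, IsM2OMatching par depth (Set.univ \ {φ}) M)
    (hD : ∃ M, IsM2OMatching par depth (desc par u) M)
    (hD' : ∃ M, IsM2OMatching par depth (desc par u \ {u}) M) :
    m2oCost par depth l (Set.univ \ {φ, u}) - m2oCost par depth l (Set.univ \ {φ}) =
      m2oCost par depth l (desc par u \ {u}) - m2oCost par depth l (desc par u) := by
  have hR := exists_isM2OMatching_compl_insert_desc hroot hu hune hT
  have hsep := noEdgeBetween_compl_insert_desc hu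
  rw [univ_diff_pair_eq_union_desc_diff hroot hune, univ_diff_singleton_eq_union_desc hroot hune,
    m2oCost_union (disjoint_compl_insert_desc.mono_right Set.sdiff_subset)
      (hsep.mono_right Set.sdiff_subset) hR hD',
    m2oCost_union disjoint_compl_insert_desc hsep hR hD]
  ring

theorem m2oCost_univ_le_add (hu : par u = φ) (hune : u ≠ φ) (hφ : Even (depth φ))
    (hu_odd : ¬Even (depth u)) (hφS : φ ∉ S) (hS : Set.univ \ {φ, u} ⊆ S)
    (hK : ∃ K, IsM2OMatching par depth S K) :
    m2oCost par depth l Set.univ ≤ l u + m2oCost par depth l S := by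
  obtain ⟨K, hK, hc⟩ := exists_m2oCost_eq (l := l) hK
  subst hu
  have hins : insert (par u) (insert u S) = Set.univ := Set.eq_univ_of_forall fun v => by
    by_cases hvφ : v = par u
    · exact .inl hvφ
    by_cases hvu : v = u
    · exact .inr (.inl hvu)
    exact .inr (.inr (hS ⟨trivial, by simp [hvφ, hvu]⟩))
  calc m2oCost par depth l Set.univ ≤ ∑ v ∈ insert u K, l v :=
        m2oCost_le (hins ▸ hK.insert_pendant hφS hune hφ hu_odd)
    _ = l u + m2oCost par depth l S := by rw [sum_insert (hK.notMem_of_par_notMem hφS), hc]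

theorem m2oCost_univ_le_add_min (hu : par u = φ) (hune : u ≠ φ) (hφ : Even (depth φ))
    (hu_odd : ¬Even (depth u)) (hT : ∃ M, IsM2OMatching par depth (Set.univ \ {φ}) M)
    (hX : ∃ M, IsM2OMatching par depth (Set.univ \ {φ, u}) M) :
    m2oCost par depth l Set.univ ≤ l u + min (m2oCost par depth l (Set.univ \ {φ}))
      (m2oCost par depth l (Set.univ \ {φ, u})) :=
  (le_min
    (m2oCost_univ_le_add hu hune hφ hu_odd (by simp) (Set.sdiff_subset_sdiff_right (by simp)) hT)
    (m2oCost_univ_le_add hu hune hφ hu_odd (by simp) le_rfl hX)).trans_eq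
    (min_add_add_left _ _ _)

theorem exists_add_le_m2oCost_univ (hroot : par φ = φ) (hφ : Even (depth φ))
    (hodd : ∀ u, par u = φ → u ≠ φ → ¬Even (depth u))
    (hT : ∃ M, IsM2OMatching par depth Set.univ M) :
    ∃ u, par u = φ ∧ u ≠ φ ∧ l u + min (m2oCost par depth l (Set.univ \ {φ}))
      (m2oCost par depth l (Set.univ \ {φ, u})) ≤ m2oCost par depth l Set.univ := by
  obtain ⟨M, hM, hc⟩ := exists_m2oCost_eq (l := l) hT
  obtain ⟨u, huM, hu, hune, huniq⟩ := hM.exists_root_edge (Set.mem_univ φ) hroot hφ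
  refine ⟨u, hu, hune, ?_⟩
  have hmin : min (m2oCost par depth l (Set.univ \ {φ})) (m2oCost par depth l (Set.univ \ {φ, u}))
      ≤ ∑ v ∈ M.erase u, l v := by
    rcases hM.erase_root_edge hroot huM hu huniq (hodd u hu hune) with h | h
    exacts [min_le_of_left_le (m2oCost_le h), min_le_of_right_le (m2oCost_le h)]
  rw [hc, ← add_sum_erase M l huM]
  gcongr

end Cost

theorem m2o_cost_recursion_general {V : Type*} [Fintype V] [DecidableEq V]
    (par : V → V) (depth : V → ℕ) (l : V → ℝ) (φ : V)
    (hroot : par φ = φ) (hdepth0 : depth φ = 0)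
    (hdepth : ∀ v, v ≠ φ → depth v = depth (par v) + 1)
    -- `C S` is the minimum cost of a many-to-one matching of `S`
    (C : Set V → ℝ)
    (hC : ∀ S : Set V, C S =
      sInf {c : ℝ | ∃ M : Finset V, IsM2OMatching par depth S M ∧ c = ∑ v ∈ M, l v})
    (children : Finset V)
    (hchildren : children = Finset.univ.filter (fun u => par u = φ ∧ u ≠ φ))
    (hne : children.Nonempty)
    -- all the relevant minimum-cost many-to-one matchings exist
    (hT : ∃ M, IsM2OMatching par depth Set.univ M)
    (hTφ : ∃ M, IsM2OMatching par depth (Set.univ \ {φ}) M)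
    (hTu : ∀ u ∈ children, ∃ M, IsM2OMatching par depth (desc par u) M)
    (hTu' : ∀ u ∈ children, ∃ M, IsM2OMatching par depth (desc par u \ {u}) M) :
    C Set.univ - C (Set.univ \ {φ}) =
      children.inf' hne
        (fun u => l u - max (C (desc par u) - C (desc par u \ {u})) 0) := by
  obtain rfl : C = m2oCost par depth l := funext hC
  have hφ : Even (depth φ) := hdepth0 ▸ Even.zero
  have hodd : ∀ u, par u = φ → u ≠ φ → ¬Even (depth u) := fun u hu hune => by
    simp [hdepth u hune, hu, hdepth0]
  have hmem : ∀ u, u ∈ children ↔ par u = φ ∧ u ≠ φ := by simp [hchildren]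
  have hterm : ∀ u ∈ children,
      l u - max (m2oCost par depth l (desc par u) - m2oCost par depth l (desc par u \ {u})) 0 =
        l u + min (m2oCost par depth l (Set.univ \ {φ})) (m2oCost par depth l (Set.univ \ {φ, u}))
          - m2oCost par depth l (Set.univ \ {φ}) := fun u hu => by
    obtain ⟨hpu, hune⟩ := (hmem u).1 hu
    have := m2oCost_univ_diff_pair_sub (l := l) hroot hpu hune hTφ (hTu u hu) (hTu' u hu)
    rcases le_total (m2oCost par depth l (desc par u)) (m2oCost par depth l (desc par u \ {u}))
      with h | h
    · rw [max_eq_right (sub_nonpos.2 h), min_eq_left (by linarith)]; ring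
    · rw [max_eq_left (sub_nonneg.2 h), min_eq_right (by linarith)]; linarith
  refine le_antisymm (le_inf' hne _ fun u hu => ?_) ?_
  · obtain ⟨hpu, hune⟩ := (hmem u).1 hu
    rw [hterm u hu]
    exact sub_le_sub_right (m2oCost_univ_le_add_min hpu hune hφ (hodd u hpu hune) hTφ
      (exists_isM2OMatching_univ_diff_pair hroot hpu hune hTφ (hTu' u hu))) _
  · obtain ⟨u, hpu, hune, hle⟩ := exists_add_le_m2oCost_univ (l := l) hroot hφ hodd hT
    have hu := (hmem u).2 ⟨hpu, hune⟩
    exact ((inf'_le _ hu).trans_eq (hterm u hu)).trans (by linarith)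

theorem m2o_cost_recursion {V : Type*} [Fintype V] [DecidableEq V]
    (par : V → V) (depth : V → ℕ) (l : V → ℝ) (φ : V)
    (hl : ∀ v, 0 ≤ l v)
    (hroot : par φ = φ) (hdepth0 : depth φ = 0)
    (hdepth : ∀ v, v ≠ φ → depth v = depth (par v) + 1)
    -- `C S` is the minimum cost of a many-to-one matching of `S`
    (C : Set V → ℝ)
    (hC : ∀ S : Set V, C S =
      sInf {c : ℝ | ∃ M : Finset V, IsM2OMatching par depth S M ∧ c = ∑ v ∈ M, l v})
    (children : Finset V)
    (hchildren : children = Finset.univ.filter (fun u => par u = φ ∧ u ≠ φ))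
    (hne : children.Nonempty)
    -- all the relevant minimum-cost many-to-one matchings exist
    (hT : ∃ M, IsM2OMatching par depth Set.univ M)
    (hTφ : ∃ M, IsM2OMatching par depth (Set.univ \ {φ}) M)
    (hTu : ∀ u ∈ children, ∃ M, IsM2OMatching par depth (desc par u) M)
    (hTu' : ∀ u ∈ children, ∃ M, IsM2OMatching par depth (desc par u \ {u}) M) :
    C Set.univ - C (Set.univ \ {φ}) =
      children.inf' hne
        (fun u => l u - max (C (desc par u) - C (desc par u \ {u})) 0) :=
  m2o_cost_recursion_general par depth l φ hroot hdepth0 hdepth C hC children hchildren hne hT hTφ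
    hTu hTu'
end
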